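/- arXiv:2404.10950 — 2 statements merged into one kernel-verified Lean document; each statement's English description precedes it below -/
import Mathlib

section
/- Let α ∈ (1,∞), let p_X be a strictly positive probability distribution on 𝒳, p_{Y|X} a channel with p_{Y|X}(y|x) > 0 for all x, y, and let r_{X|Y} be a strictly positive reverse channel. Then over all channels q̃_{Y|X}, the functional F̃_α^C(q̃_{Y|X}, r_{X|Y}) is maximized by q̃*_{Y|X}(y|x) := p_{Y|X}(y|x) r_{X|Y}(x|y)^{1−1/α} / Σ_{y'} p_{Y|X}(y'|x) r_{X|Y}(x|y')^{1−1/α}, i.e., F̃_α^C(q̃_{Y|X}, r_{X|Y}) ≤ F̃_α^C(q̃*_{Y|X}, r_{X|Y}) for every channel q̃_{Y|X}. -/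
/-!
Since `(α / (1 - α)) (1 - 1/α) = -1`, up to a term not depending on `q̃`, the contribution
of `q̃(·|x)` to `F̃_α^C` is `(α / (1 - α)) (D(q̃(·|x) ‖ p(·|x)) - 𝔼_{q̃(·|x)}[log w])`
with `w = r(x|·)^{1-1/α}`. The coefficient is negative, so it suffices to minimize
`D(q ‖ p) - 𝔼_q[log w] = D(q ‖ q*) - log ∑ p w`, where `q* ∝ p w` is the tilted
distribution; by Gibbs' inequality the minimum is attained at `q = q*`.
-/

/-- A probability mass function on a finite type. -/
def IsPMF {Z : Type*} [Fintype Z] (q : Z → ℝ) : Prop :=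
  (∀ z, 0 ≤ q z) ∧ ∑ z, q z = 1

/-- Kullback--Leibler divergence (natural log). -/
noncomputable def klD {Z : Type*} [Fintype Z] (p q : Z → ℝ) : ℝ :=
  ∑ z, p z * Real.log (p z / q z)

/-- `F̃_α^C(q̃_{Y|X}, r_{X|Y}) = (α/(1−α)) D(p_X q̃_{Y|X} ‖ p_X p_{Y|X})
  + Σ_{x,y} p_X(x) q̃_{Y|X}(y|x) log(r(x|y)/p_X(x))`. -/
noncomputable def FtildeC {X Y : Type*} [Fintype X] [Fintype Y]
    (α : ℝ) (pX : X → ℝ) (pYX : X → Y → ℝ) (qt : X → Y → ℝ) (r : Y → X → ℝ) : ℝ :=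
  (α / (1 - α)) * klD (fun z : X × Y => pX z.1 * qt z.1 z.2)
      (fun z : X × Y => pX z.1 * pYX z.1 z.2)
  + ∑ x, ∑ y, pX x * qt x y * Real.log (r y x / pX x)

open Real Finset InformationTheory

section KL

variable {Z : Type*} [Fintype Z]

lemma klD_self (q : Z → ℝ) : klD q q = 0 := by
  refine sum_eq_zero fun z _ => ?_
  rcases eq_or_ne (q z) 0 with h | h <;> simp [h]

lemma klD_eq_sum_mul_klFun {q s : Z → ℝ} (hs : ∀ z, 0 < s z) (hqs : ∑ z, q z = ∑ z, s z) :
    klD q s = ∑ z, s z * klFun (q z / s z) := by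
  have hterm : ∀ z, s z * klFun (q z / s z) = q z * log (q z / s z) + (s z - q z) := by
    intro z
    rw [klFun_apply]
    field_simp [(hs z).ne']
    ring
  simp only [hterm, sum_add_distrib, sum_sub_distrib, hqs, sub_self, add_zero, klD]

lemma klD_nonneg {q s : Z → ℝ} (hq : ∀ z, 0 ≤ q z) (hs : ∀ z, 0 < s z)
    (hqs : ∑ z, q z = ∑ z, s z) : 0 ≤ klD q s := by
  rw [klD_eq_sum_mul_klFun hs hqs]
  exact sum_nonneg fun z _ => mul_nonneg (hs z).le (klFun_nonneg (div_nonneg (hq z) (hs z).le))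

end KL

section Tilted

variable {Z : Type*} [Fintype Z]

noncomputable def tilted (p w : Z → ℝ) : Z → ℝ :=
  fun z => p z * w z / ∑ z', p z' * w z'

variable {p w : Z → ℝ}

lemma sum_mul_pos_of_pos [Nonempty Z] (hp : ∀ z, 0 < p z) (hw : ∀ z, 0 < w z) :
    0 < ∑ z, p z * w z :=
  sum_pos (fun z _ => mul_pos (hp z) (hw z)) univ_nonempty

lemma tilted_pos [Nonempty Z] (hp : ∀ z, 0 < p z) (hw : ∀ z, 0 < w z) (z : Z) :
    0 < tilted p w z :=
  div_pos (mul_pos (hp z) (hw z)) (sum_mul_pos_of_pos hp hw)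

lemma sum_tilted [Nonempty Z] (hp : ∀ z, 0 < p z) (hw : ∀ z, 0 < w z) :
    ∑ z, tilted p w z = 1 := by
  simp only [tilted, ← sum_div, div_self (sum_mul_pos_of_pos hp hw).ne']

lemma klD_sub_sum_mul_log_eq {q : Z → ℝ} (hp : ∀ z, p z ≠ 0) (hw : ∀ z, w z ≠ 0)
    (hZ : ∑ z, p z * w z ≠ 0) (hq1 : ∑ z, q z = 1) :
    klD q p - ∑ z, q z * log (w z) = klD q (tilted p w) - log (∑ z, p z * w z) := by
  have hterm : ∀ z, q z * log (q z / p z) - q z * log (w z)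
      = q z * log (q z / tilted p w z) - q z * log (∑ z, p z * w z) := by
    intro z
    rcases eq_or_ne (q z) 0 with hqz | hqz
    · simp [hqz]
    have htz : tilted p w z ≠ 0 := div_ne_zero (mul_ne_zero (hp z) (hw z)) hZ
    rw [log_div hqz (hp z), log_div hqz htz, tilted, log_div (mul_ne_zero (hp z) (hw z)) hZ,
      log_mul (hp z) (hw z)]
    ring
  rw [klD, klD, ← sum_sub_distrib, sum_congr rfl fun z _ => hterm z, sum_sub_distrib,
    ← sum_mul, hq1, one_mul]

/-- Gibbs variational principle. -/
lemma klD_tilted_sub_le [Nonempty Z] {q : Z → ℝ} (hp : ∀ z, 0 < p z) (hw : ∀ z, 0 < w z)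
    (hq : ∀ z, 0 ≤ q z) (hq1 : ∑ z, q z = 1) :
    klD (tilted p w) p - ∑ z, tilted p w z * log (w z) ≤ klD q p - ∑ z, q z * log (w z) := by
  have hp' := fun z => (hp z).ne'
  have hw' := fun z => (hw z).ne'
  have hZ := (sum_mul_pos_of_pos hp hw).ne'
  have hsum := sum_tilted hp hw
  rw [klD_sub_sum_mul_log_eq hp' hw' hZ hsum, klD_sub_sum_mul_log_eq hp' hw' hZ hq1, klD_self]
  exact sub_le_sub_right (klD_nonneg hq (tilted_pos hp hw) (hq1.trans hsum.symm)) _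

end Tilted

section Channels

variable {X Y : Type*} [Fintype X] [Fintype Y]

lemma klD_compProd_eq_sum {pX : X → ℝ} (hpX : ∀ x, pX x ≠ 0) (q p : X → Y → ℝ) :
    klD (fun z : X × Y => pX z.1 * q z.1 z.2) (fun z => pX z.1 * p z.1 z.2)
      = ∑ x, pX x * klD (q x) (p x) := by
  simp only [klD, Fintype.sum_prod_type, mul_sum, mul_div_mul_left _ _ (hpX _), mul_assoc]

lemma FtildeC_eq_sum {α : ℝ} (hα0 : α ≠ 0) (hα1 : α ≠ 1) {pX : X → ℝ} (hpX : ∀ x, 0 < pX x)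
    (pYX : X → Y → ℝ) {qt : X → Y → ℝ} (hqt : ∀ x, ∑ y, qt x y = 1) {r : Y → X → ℝ}
    (hr : ∀ y x, 0 < r y x) :
    FtildeC α pX pYX qt r = ∑ x, pX x * (α / (1 - α) *
        (klD (qt x) (pYX x) - ∑ y, qt x y * log (r y x ^ (1 - 1 / α))))
      - ∑ x, pX x * log (pX x) := by
  have hcoef : α / (1 - α) * (1 - 1 / α) = -1 := by
    field_simp [sub_ne_zero.mpr hα1.symm]
    ring
  rw [FtildeC, klD_compProd_eq_sum fun x => (hpX x).ne', mul_sum, ← sum_add_distrib,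
    ← sum_sub_distrib]
  refine sum_congr rfl fun x _ => ?_
  have hlog_r : ∑ y, qt x y * log (r y x ^ (1 - 1 / α))
      = (1 - 1 / α) * ∑ y, qt x y * log (r y x) := by
    simp only [log_rpow (hr _ x), mul_sum, mul_left_comm]
  have hlog_div : ∑ y, pX x * qt x y * log (r y x / pX x)
      = pX x * ∑ y, qt x y * log (r y x) - pX x * log (pX x) := by
    simp only [log_div (hr _ x).ne' (hpX x).ne', mul_sub, sum_sub_distrib, ← sum_mul, ← mul_sum,
      hqt x, mul_assoc, one_mul]
  rw [hlog_r, hlog_div]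
  linear_combination (pX x * ∑ y, qt x y * log (r y x)) * hcoef

end Channels

theorem FtildeC_le_tilted_channel_general {X Y : Type*} [Fintype X] [Fintype Y]
    [Nonempty Y]
    (α : ℝ) (hα : 1 < α)
    (pX : X → ℝ) (hpXpos : ∀ x, 0 < pX x)
    (pYX : X → Y → ℝ) (hpYXpos : ∀ x y, 0 < pYX x y)
    (r : Y → X → ℝ) (hrpos : ∀ y x, 0 < r y x) :
    ∀ qt : X → Y → ℝ, (∀ x, IsPMF (qt x)) →
      FtildeC α pX pYX qt r ≤
      FtildeC α pX pYX
        (fun x y => pYX x y * r y x ^ (1 - 1 / α) /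
          ∑ y', pYX x y' * r y' x ^ (1 - 1 / α)) r := by
  intro qt hqt
  have hα0 : α ≠ 0 := by positivity
  have hcoef : α / (1 - α) ≤ 0 := div_nonpos_of_nonneg_of_nonpos (by positivity) (by linarith)
  set w : X → Y → ℝ := fun x y => r y x ^ (1 - 1 / α)
  have hw : ∀ x y, 0 < w x y := fun x y => rpow_pos_of_pos (hrpos y x) _
  change _ ≤ FtildeC α pX pYX (fun x => tilted (pYX x) (w x)) r
  rw [FtildeC_eq_sum hα0 hα.ne' hpXpos pYX (fun x => (hqt x).2) hrpos,
    FtildeC_eq_sum hα0 hα.ne' hpXpos pYX (fun x => sum_tilted (hpYXpos x) (hw x)) hrpos]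
  refine sub_le_sub_right (sum_le_sum fun x _ => mul_le_mul_of_nonneg_left ?_ (hpXpos x).le) _
  exact mul_le_mul_of_nonpos_left
    (klD_tilted_sub_le (hpYXpos x) (hw x) (hqt x).1 (hqt x).2) hcoef

/-- For `α > 1` and a fixed strictly positive reverse channel `r_{X|Y}`: over all channels
`q̃_{Y|X}`, the functional `F̃_α^C(·, r_{X|Y})` is maximized by
`q̃*(y|x) = p_{Y|X}(y|x) r(x|y)^{1−1/α} / Σ_{y'} p_{Y|X}(y'|x) r(x|y')^{1−1/α}`. -/
theorem FtildeC_le_tilted_channel {X Y : Type*} [Fintype X] [Fintype Y]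
    [Nonempty X] [Nonempty Y]
    (α : ℝ) (hα : 1 < α)
    (pX : X → ℝ) (hpX : IsPMF pX) (hpXpos : ∀ x, 0 < pX x)
    (pYX : X → Y → ℝ) (hpYX : ∀ x, IsPMF (pYX x)) (hpYXpos : ∀ x y, 0 < pYX x y)
    (r : Y → X → ℝ) (hr : ∀ y, IsPMF (r y)) (hrpos : ∀ y x, 0 < r y x) :
    ∀ qt : X → Y → ℝ, (∀ x, IsPMF (qt x)) →
      FtildeC α pX pYX qt r ≤
      FtildeC α pX pYX
        (fun x y => pYX x y * r y x ^ (1 - 1 / α) /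
          ∑ y', pYX x y' * r y' x ^ (1 - 1 / α)) r :=
  FtildeC_le_tilted_channel_general α hα pX hpXpos pYX hpYXpos r hrpos
end

section
/- Let α ∈ (1,∞), let p_X be a strictly positive probability distribution on 𝒳, p_{Y|X} a channel with p_{Y|X}(y|x) > 0 for all x, y, and let q̃^{(0)}_{Y|X} be a channel with q̃^{(0)}_{Y|X}(y|x) > 0 for all x, y. Define recursively r^{(k)}_{X|Y}(x|y) := p_X(x) q̃^{(k)}_{Y|X}(y|x) / Σ_{x'} p_X(x') q̃^{(k)}_{Y|X}(y|x') and q̃^{(k+1)}_{Y|X}(y|x) := p_{Y|X}(y|x) r^{(k)}_{X|Y}(x|y)^{1−1/α} / Σ_{y'} p_{Y|X}(y'|x) r^{(k)}_{X|Y}(x|y')^{1−1/α}. Then (a) the sequence of objective values is nondecreasing: F̃_α^C(q̃^{(k)}_{Y|X}, r^{(k)}_{X|Y}) ≤ F̃_α^C(q̃^{(k+1)}_{Y|X}, r^{(k)}_{X|Y}) ≤ F̃_α^C(q̃^{(k+1)}_{Y|X}, r^{(k+1)}_{X|Y}) ≤ I_α^C for all k ≥ 0, and (b) lim_{k→∞}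 F̃_α^C(q̃^{(k+1)}_{Y|X}, r^{(k)}_{X|Y}) = I_α^C, the Augustin–Csiszár mutual information of order α. -/
/-- Rényi divergence of order `α`, valued in `EReal` (equal to `⊤` when `α > 1` and
`q` vanishes somewhere on the support of `p`). -/
noncomputable def renyiDE {Z : Type*} [Fintype Z] (α : ℝ) (p q : Z → ℝ) : EReal :=
  if 1 < α ∧ ∃ z, p z ≠ 0 ∧ q z = 0 then ⊤
  else (((1 / (α - 1)) * Real.log (∑ z, p z ^ α * q z ^ (1 - α)) : ℝ) : EReal)

/-- Augustin--Csiszár mutual information of order `α`. -/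
noncomputable def acMI {X Y : Type*} [Fintype X] [Fintype Y]
    (α : ℝ) (pX : X → ℝ) (pYX : X → Y → ℝ) : EReal :=
  sInf {v : EReal | ∃ qY : Y → ℝ, IsPMF qY ∧
    v = ∑ x, ((pX x : ℝ) : EReal) * renyiDE α (fun y => pYX x y) qY}

/-- Posterior reverse channel: `r(x|y) = p_X(x) q̃(y|x) / Σ_{x'} p_X(x') q̃(y|x')`. -/
noncomputable def rpost {X Y : Type*} [Fintype X] (pX : X → ℝ) (qt : X → Y → ℝ) :
    Y → X → ℝ :=
  fun y x => pX x * qt x y / ∑ x', pX x' * qt x' y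

/-- The AO sequence of channels: `q̃^{(0)}` given, and
`q̃^{(k+1)}(y|x) = p_{Y|X}(y|x) r^{(k)}(x|y)^{1−1/α} / Σ_{y'} (…)`
where `r^{(k)} = rpost pX q̃^{(k)}`. -/
noncomputable def qtseq {X Y : Type*} [Fintype X] [Fintype Y]
    (α : ℝ) (pX : X → ℝ) (pYX : X → Y → ℝ) (q0 : X → Y → ℝ) : ℕ → X → Y → ℝ
  | 0 => q0
  | k + 1 => fun x y =>
      pYX x y * rpost pX (qtseq α pX pYX q0 k) y x ^ (1 - 1 / α) /
        ∑ y', pYX x y' * rpost pX (qtseq α pX pYX q0 k) y' x ^ (1 - 1 / α)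

open Real Finset Filter Topology

theorem EReal.coe_finset_sum {ι : Type*} (s : Finset ι) (f : ι → ℝ) :
    ((∑ i ∈ s, f i : ℝ) : EReal) = ∑ i ∈ s, (f i : EReal) :=
  map_sum (⟨⟨Real.toEReal, EReal.coe_zero⟩, EReal.coe_add⟩ : ℝ →+ EReal) f s

namespace AugustinCsiszar

section Divergence

variable {Z : Type*} [Fintype Z]

theorem sum_mul_log_div_le_log_sum {u v : Z → ℝ} (hu : ∑ z, u z = 1)
    (hupos : ∀ z, 0 < u z) (hvpos : ∀ z, 0 < v z) :
    ∑ z, u z * log (v z / u z) ≤ log (∑ z, v z) := by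
  have h := strictConcaveOn_log_Ioi.concaveOn.le_map_sum (t := univ) (w := u)
    (p := fun z => v z / u z) (fun z _ => (hupos z).le) hu
    (fun z _ => div_pos (hvpos z) (hupos z))
  simpa only [smul_eq_mul, mul_div_cancel₀ _ (hupos _).ne'] using h

theorem klD_eq_sum_mul_log_sub {u v : Z → ℝ} (hupos : ∀ z, 0 < u z) (hvpos : ∀ z, 0 < v z) :
    klD u v = ∑ z, u z * (log (u z) - log (v z)) :=
  sum_congr rfl fun z _ => by rw [log_div (hupos z).ne' (hvpos z).ne']

theorem klD_nonneg {u v : Z → ℝ} (hu : ∑ z, u z = 1) (hupos : ∀ z, 0 < u z)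
    (hv : ∑ z, v z = 1) (hvpos : ∀ z, 0 < v z) : 0 ≤ klD u v := by
  have h := sum_mul_log_div_le_log_sum hu hupos hvpos
  rw [hv, log_one] at h
  have hneg : klD u v = -∑ z, u z * log (v z / u z) := by
    rw [klD_eq_sum_mul_log_sub hupos hvpos, ← sum_neg_distrib]
    exact sum_congr rfl fun z _ => by rw [log_div (hvpos z).ne' (hupos z).ne']; ring
  linarith

theorem klD_self (q : Z → ℝ) : klD q q = 0 := by
  refine sum_eq_zero fun z _ => ?_
  rcases eq_or_ne (q z) 0 with h | h
  · rw [h, zero_mul]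
  · rw [div_self h, log_one, mul_zero]

end Divergence

theorem tendsto_of_le_of_sub_le_sub_succ {g a : ℕ → ℝ} {L : ℝ} (hg : ∀ k, g k ≤ L)
    (ha : ∀ k, 0 ≤ a k) (hstep : ∀ k, L - g k ≤ a k - a (k + 1)) :
    Tendsto g atTop (𝓝 L) := by
  have hsum : Summable fun k => L - g k := by
    refine summable_of_sum_range_le (c := a 0) (fun k => sub_nonneg.2 (hg k)) fun n => ?_
    calc ∑ k ∈ range n, (L - g k) ≤ ∑ k ∈ range n, (a k - a (k + 1)) :=
          sum_le_sum fun k _ => hstep k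
      _ = a 0 - a n := sum_range_sub' a n
      _ ≤ a 0 := sub_le_self _ (ha n)
  simpa using (tendsto_const_nhds (x := L)).sub hsum.tendsto_atTop_zero

theorem sum_mul_rpow_le {ι : Type*} [Fintype ι] {α : ℝ} (hα : 1 < α) {a q s : ι → ℝ}
    (ha : ∀ i, 0 < a i) (hq : ∀ i, 0 < q i) (hs : ∀ i, 0 < s i) :
    ∑ i, a i * s i ^ (1 - 1 / α) ≤
      (∑ i, a i ^ α * q i ^ (1 - α)) ^ (1 / α) * (∑ i, q i * s i) ^ (1 - 1 / α) := by
  have hα₀ : α ≠ 0 := by linarith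
  have hα₁ : α - 1 ≠ 0 := by linarith
  have h := inner_le_Lp_mul_Lq_of_nonneg univ (Real.HolderConjugate.conjExponent hα)
    (f := fun i => a i * q i ^ ((1 - α) / α)) (g := fun i => (q i * s i) ^ (1 - 1 / α))
    (fun i _ => (mul_pos (ha i) (rpow_pos_of_pos (hq i) _)).le)
    (fun i _ => (rpow_pos_of_pos (mul_pos (hq i) (hs i)) _).le)
  have hprod : ∀ i, a i * q i ^ ((1 - α) / α) * (q i * s i) ^ (1 - 1 / α) =
      a i * s i ^ (1 - 1 / α) := fun i => by
    rw [mul_rpow (hq i).le (hs i).le, mul_assoc, ← mul_assoc (q i ^ _), ← rpow_add (hq i),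
      show (1 - α) / α + (1 - 1 / α) = 0 by field_simp; ring, rpow_zero, one_mul]
  have hf : ∀ i, (a i * q i ^ ((1 - α) / α)) ^ α = a i ^ α * q i ^ (1 - α) := fun i => by
    rw [mul_rpow (ha i).le (rpow_pos_of_pos (hq i) _).le, ← rpow_mul (hq i).le,
      div_mul_cancel₀ _ hα₀]
  have hg : ∀ i, ((q i * s i) ^ (1 - 1 / α)) ^ α.conjExponent = q i * s i := fun i => by
    rw [← rpow_mul (mul_pos (hq i) (hs i)).le, Real.conjExponent,
      show (1 - 1 / α) * (α / (α - 1)) = 1 by field_simp, rpow_one]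
  simp only [hprod, hf, hg] at h
  rwa [Real.conjExponent, one_div_div, sub_div, div_self hα₀] at h

section Normalize

variable {A B : Type*} [Fintype B]

noncomputable def normalizeRows (w : A → B → ℝ) : A → B → ℝ := fun a b => w a b / ∑ b', w a b'

variable [Nonempty B] {w : A → B → ℝ}

theorem normalizeRows_pos (hw : ∀ a b, 0 < w a b) (a : A) (b : B) :
    0 < normalizeRows w a b :=
  div_pos (hw a b) (sum_pos (fun b' _ => hw a b') univ_nonempty)

theorem sum_normalizeRows (hw : ∀ a b, 0 < w a b) (a : A) : ∑ b, normalizeRows w a b = 1 := by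
  simp only [normalizeRows]
  rw [← sum_div, div_self (sum_pos (fun b' _ => hw a b') univ_nonempty).ne']

theorem log_normalizeRows (hw : ∀ a b, 0 < w a b) (a : A) (b : B) :
    log (normalizeRows w a b) = log (w a b) - log (∑ b', w a b') :=
  log_div (hw a b).ne' (sum_pos (fun b' _ => hw a b') univ_nonempty).ne'

end Normalize

section Channels

variable {X Y : Type*} [Fintype X] {pX : X → ℝ} {qt : X → Y → ℝ}

noncomputable def outputDist (pX : X → ℝ) (qt : X → Y → ℝ) (y : Y) : ℝ := ∑ x, pX x * qt x y

theorem sum_outputDist [Fintype Y] (hpX : ∑ x, pX x = 1) (hqt : ∀ x, ∑ y, qt x y = 1) :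
    ∑ y, outputDist pX qt y = 1 := by
  simp only [outputDist]
  rw [sum_comm]
  simp only [← mul_sum, hqt, mul_one, hpX]

theorem rpost_eq_normalizeRows : rpost pX qt = normalizeRows fun y x => pX x * qt x y := rfl

variable [Nonempty X]

theorem outputDist_pos (hpX : ∀ x, 0 < pX x) (hqt : ∀ x y, 0 < qt x y) (y : Y) :
    0 < outputDist pX qt y :=
  sum_pos (fun x _ => mul_pos (hpX x) (hqt x y)) univ_nonempty

theorem rpost_pos (hpX : ∀ x, 0 < pX x) (hqt : ∀ x y, 0 < qt x y) (y : Y) (x : X) :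
    0 < rpost pX qt y x :=
  normalizeRows_pos (fun y x => mul_pos (hpX x) (hqt x y)) y x

theorem sum_rpost (hpX : ∀ x, 0 < pX x) (hqt : ∀ x y, 0 < qt x y) (y : Y) :
    ∑ x, rpost pX qt y x = 1 :=
  sum_normalizeRows (fun y x => mul_pos (hpX x) (hqt x y)) y

theorem log_rpost (hpX : ∀ x, 0 < pX x) (hqt : ∀ x y, 0 < qt x y) (y : Y) (x : X) :
    log (rpost pX qt y x) = log (pX x) + log (qt x y) - log (outputDist pX qt y) := by
  rw [rpost_eq_normalizeRows, log_normalizeRows (fun y x => mul_pos (hpX x) (hqt x y)),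
    log_mul (hpX x).ne' (hqt x y).ne']
  rfl

theorem outputDist_mul_rpost (hpX : ∀ x, 0 < pX x) (hqt : ∀ x y, 0 < qt x y) (y : Y) (x : X) :
    outputDist pX qt y * rpost pX qt y x = pX x * qt x y :=
  mul_div_cancel₀ _ (outputDist_pos hpX hqt y).ne'

end Channels

section Update

variable {X Y : Type*} [Fintype Y] {α : ℝ} {pYX : X → Y → ℝ}

noncomputable def channelUpdate (α : ℝ) (pYX : X → Y → ℝ) (r : Y → X → ℝ) : X → Y → ℝ :=
  normalizeRows fun x y => pYX x y * r y x ^ (1 - 1 / α)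

variable [Nonempty Y] {r : Y → X → ℝ}

theorem channelUpdate_pos (hpYX : ∀ x y, 0 < pYX x y) (hr : ∀ y x, 0 < r y x) (x : X) (y : Y) :
    0 < channelUpdate α pYX r x y :=
  normalizeRows_pos (fun x y => mul_pos (hpYX x y) (rpow_pos_of_pos (hr y x) _)) x y

theorem sum_channelUpdate (hpYX : ∀ x y, 0 < pYX x y) (hr : ∀ y x, 0 < r y x) (x : X) :
    ∑ y, channelUpdate α pYX r x y = 1 :=
  sum_normalizeRows (fun x y => mul_pos (hpYX x y) (rpow_pos_of_pos (hr y x) _)) x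

theorem log_channelUpdate (hpYX : ∀ x y, 0 < pYX x y) (hr : ∀ y x, 0 < r y x) (x : X) (y : Y) :
    log (channelUpdate α pYX r x y) = log (pYX x y) + (1 - 1 / α) * log (r y x)
      - log (∑ y', pYX x y' * r y' x ^ (1 - 1 / α)) := by
  rw [channelUpdate, log_normalizeRows (fun x y => mul_pos (hpYX x y) (rpow_pos_of_pos (hr y x) _)),
    log_mul (hpYX x y).ne' (rpow_pos_of_pos (hr y x) _).ne', log_rpow (hr y x)]

end Update

section Objective

variable {X Y : Type*} [Fintype X] [Fintype Y] {α : ℝ} {pX : X → ℝ} {pYX : X → Y → ℝ}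
  {qt : X → Y → ℝ} {r : Y → X → ℝ}

noncomputable def maxFtildeC (α : ℝ) (pX : X → ℝ) (pYX : X → Y → ℝ) (r : Y → X → ℝ) : ℝ :=
  ∑ x, pX x * (α / (α - 1) * log (∑ y, pYX x y * r y x ^ (1 - 1 / α)) - log (pX x))

theorem qtseq_succ (q0 : X → Y → ℝ) (k : ℕ) :
    qtseq α pX pYX q0 (k + 1) = channelUpdate α pYX (rpost pX (qtseq α pX pYX q0 k)) :=
  rfl

theorem FtildeC_eq_sum (hpX : ∀ x, 0 < pX x)
    (hpYX : ∀ x y, 0 < pYX x y) (hqt : ∀ x y, 0 < qt x y) (hr : ∀ y x, 0 < r y x) :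
    FtildeC α pX pYX qt r = ∑ x, ∑ y, pX x * qt x y *
      (α / (α - 1) * (log (pYX x y) - log (qt x y)) + log (r y x) - log (pX x)) := by
  rw [FtildeC, klD, Fintype.sum_prod_type, mul_sum, ← sum_add_distrib]
  refine sum_congr rfl fun x _ => ?_
  rw [mul_sum, ← sum_add_distrib]
  refine sum_congr rfl fun y _ => ?_
  rw [mul_div_mul_left _ _ (hpX x).ne', log_div (hqt x y).ne' (hpYX x y).ne',
    log_div (hr y x).ne' (hpX x).ne', ← neg_sub α 1, div_neg]
  ring

theorem FtildeC_sub_FtildeC {r' : Y → X → ℝ} (hpX : ∀ x, 0 < pX x)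
    (hr : ∀ y x, 0 < r y x) (hr' : ∀ y x, 0 < r' y x) :
    FtildeC α pX pYX qt r' - FtildeC α pX pYX qt r =
      ∑ x, ∑ y, pX x * qt x y * (log (r' y x) - log (r y x)) := by
  rw [FtildeC, FtildeC, add_sub_add_left_eq_sub, ← sum_sub_distrib]
  refine sum_congr rfl fun x _ => ?_
  rw [← sum_sub_distrib]
  refine sum_congr rfl fun y _ => ?_
  rw [log_div (hr' y x).ne' (hpX x).ne', log_div (hr y x).ne' (hpX x).ne']
  ring

theorem FtildeC_le_FtildeC_rpost [Nonempty X] (hpX : ∀ x, 0 < pX x) (hqt : ∀ x y, 0 < qt x y)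
    (hr : ∀ y x, 0 < r y x) (hrsum : ∀ y, ∑ x, r y x = 1) :
    FtildeC α pX pYX qt r ≤ FtildeC α pX pYX qt (rpost pX qt) := by
  rw [← sub_nonneg, FtildeC_sub_FtildeC hpX hr (rpost_pos hpX hqt), sum_comm]
  refine sum_nonneg fun y _ => ?_
  have hkl : ∑ x, pX x * qt x y * (log (rpost pX qt y x) - log (r y x)) =
      outputDist pX qt y * klD (rpost pX qt y) (r y) := by
    rw [klD_eq_sum_mul_log_sub (rpost_pos hpX hqt y) (hr y), mul_sum]
    exact sum_congr rfl fun x _ => by rw [← mul_assoc, outputDist_mul_rpost hpX hqt]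
  rw [hkl]
  exact mul_nonneg (outputDist_pos hpX hqt y).le
    (klD_nonneg (sum_rpost hpX hqt y) (rpost_pos hpX hqt y) (hrsum y) (hr y))

theorem sum_mul_log_rpost_sub_log_rpost [Nonempty X] {qs : X → Y → ℝ} (hpX : ∀ x, 0 < pX x)
    (hqs : ∀ x y, 0 < qs x y) (hqt : ∀ x y, 0 < qt x y) :
    ∑ x, ∑ y, pX x * qs x y * (log (rpost pX qs y x) - log (rpost pX qt y x)) =
      ∑ x, pX x * klD (qs x) (qt x) - klD (outputDist pX qs) (outputDist pX qt) := by
  have hsplit : ∀ x y, pX x * qs x y * (log (rpost pX qs y x) - log (rpost pX qt y x)) =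
      pX x * (qs x y * (log (qs x y) - log (qt x y)))
        - pX x * qs x y * (log (outputDist pX qs y) - log (outputDist pX qt y)) := by
    intro x y
    rw [log_rpost hpX hqs, log_rpost hpX hqt]
    ring
  simp only [hsplit, sum_sub_distrib, ← mul_sum]
  rw [sum_comm, klD_eq_sum_mul_log_sub (outputDist_pos hpX hqs) (outputDist_pos hpX hqt)]
  simp only [← sum_mul, ← klD_eq_sum_mul_log_sub (hqs _) (hqt _)]
  rfl

variable [Nonempty Y]

theorem FtildeC_eq_maxFtildeC_sub (hα : 1 < α)
    (hpX : ∀ x, 0 < pX x) (hpYX : ∀ x y, 0 < pYX x y) (hqt : ∀ x, ∑ y, qt x y = 1)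
    (hqtpos : ∀ x y, 0 < qt x y) (hr : ∀ y x, 0 < r y x) :
    FtildeC α pX pYX qt r = maxFtildeC α pX pYX r
      - α / (α - 1) * ∑ x, pX x * klD (qt x) (channelUpdate α pYX r x) := by
  have hcβ : α / (α - 1) * (1 - 1 / α) = 1 := by
    field_simp [(by linarith : α - 1 ≠ 0), (by linarith : α ≠ 0)]
  rw [FtildeC_eq_sum hpX hpYX hqtpos hr, maxFtildeC, mul_sum, ← sum_sub_distrib]
  refine sum_congr rfl fun x _ => ?_
  have hconst : ∀ c, pX x * c = ∑ y, pX x * qt x y * c := fun c => by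
    rw [← sum_mul, ← mul_sum, hqt x, mul_one]
  rw [hconst, klD_eq_sum_mul_log_sub (hqtpos x) (channelUpdate_pos hpYX hr x), mul_sum,
    mul_sum, ← sum_sub_distrib]
  refine sum_congr rfl fun y _ => ?_
  rw [log_channelUpdate hpYX hr]
  linear_combination (-(pX x * qt x y * log (r y x))) * hcβ

theorem FtildeC_le_maxFtildeC (hα : 1 < α) (hpX : ∀ x, 0 < pX x) (hpYX : ∀ x y, 0 < pYX x y)
    (hqt : ∀ x, ∑ y, qt x y = 1) (hqtpos : ∀ x y, 0 < qt x y) (hr : ∀ y x, 0 < r y x) :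
    FtildeC α pX pYX qt r ≤ maxFtildeC α pX pYX r := by
  rw [FtildeC_eq_maxFtildeC_sub hα hpX hpYX hqt hqtpos hr, sub_le_self_iff]
  exact mul_nonneg (div_pos (by linarith) (by linarith)).le <| sum_nonneg fun x _ =>
    mul_nonneg (hpX x).le <| klD_nonneg (hqt x) (hqtpos x) (sum_channelUpdate hpYX hr x)
      (channelUpdate_pos hpYX hr x)

theorem FtildeC_channelUpdate (hα : 1 < α) (hpX : ∀ x, 0 < pX x) (hpYX : ∀ x y, 0 < pYX x y)
    (hr : ∀ y x, 0 < r y x) :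
    FtildeC α pX pYX (channelUpdate α pYX r) r = maxFtildeC α pX pYX r := by
  rw [FtildeC_eq_maxFtildeC_sub hα hpX hpYX (sum_channelUpdate hpYX hr)
    (channelUpdate_pos hpYX hr) hr]
  simp only [klD_self, mul_zero, sum_const_zero, sub_zero]

end Objective

section Augustin

variable {X Y : Type*} [Fintype Y] {α : ℝ} {pYX : X → Y → ℝ} {q : Y → ℝ}

noncomputable def renyiSum (α : ℝ) (pYX : X → Y → ℝ) (q : Y → ℝ) (x : X) : ℝ :=
  ∑ y, pYX x y ^ α * q y ^ (1 - α)

/-- For positive `q`, the Augustin objective `Σ_x p_X(x) D_α(p_{Y|X}(·|x) ‖ q)`. -/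
noncomputable def augustinObj [Fintype X] (α : ℝ) (pX : X → ℝ) (pYX : X → Y → ℝ)
    (q : Y → ℝ) : ℝ :=
  ∑ x, pX x * (1 / (α - 1) * log (renyiSum α pYX q x))

noncomputable def tiltedChannel (α : ℝ) (pYX : X → Y → ℝ) (q : Y → ℝ) : X → Y → ℝ :=
  normalizeRows fun x y => pYX x y ^ α * q y ^ (1 - α)

theorem tiltedChannel_apply (x : X) (y : Y) :
    tiltedChannel α pYX q x y = pYX x y ^ α * q y ^ (1 - α) / renyiSum α pYX q x :=
  rfl

variable [Nonempty Y]

theorem renyiSum_pos (hpYX : ∀ x y, 0 < pYX x y) (hq : ∀ y, 0 < q y) (x : X) :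
    0 < renyiSum α pYX q x :=
  sum_pos (fun y _ => mul_pos (rpow_pos_of_pos (hpYX x y) _) (rpow_pos_of_pos (hq y) _))
    univ_nonempty

theorem tiltedChannel_pos (hpYX : ∀ x y, 0 < pYX x y) (hq : ∀ y, 0 < q y) (x : X) (y : Y) :
    0 < tiltedChannel α pYX q x y :=
  normalizeRows_pos (fun x y => mul_pos (rpow_pos_of_pos (hpYX x y) _) (rpow_pos_of_pos (hq y) _))
    x y

theorem sum_tiltedChannel (hpYX : ∀ x y, 0 < pYX x y) (hq : ∀ y, 0 < q y) (x : X) :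
    ∑ y, tiltedChannel α pYX q x y = 1 :=
  sum_normalizeRows (fun x y => mul_pos (rpow_pos_of_pos (hpYX x y) _) (rpow_pos_of_pos (hq y) _))
    x

theorem log_tiltedChannel (hpYX : ∀ x y, 0 < pYX x y) (hq : ∀ y, 0 < q y) (x : X) (y : Y) :
    log (tiltedChannel α pYX q x y) =
      α * log (pYX x y) + (1 - α) * log (q y) - log (renyiSum α pYX q x) := by
  rw [tiltedChannel, log_normalizeRows
      (fun x y => mul_pos (rpow_pos_of_pos (hpYX x y) _) (rpow_pos_of_pos (hq y) _)),
    log_mul (rpow_pos_of_pos (hpYX x y) _).ne' (rpow_pos_of_pos (hq y) _).ne',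
    log_rpow (hpYX x y), log_rpow (hq y)]
  rfl

variable [Fintype X] {pX : X → ℝ}

theorem maxFtildeC_le_augustinObj (hα : 1 < α) (hpX : ∑ x, pX x = 1) (hpXpos : ∀ x, 0 < pX x)
    (hpYX : ∀ x y, 0 < pYX x y) (hq : ∑ y, q y = 1) (hqpos : ∀ y, 0 < q y) {r : Y → X → ℝ}
    (hr : ∀ y x, 0 < r y x) (hrsum : ∀ y, ∑ x, r y x = 1) :
    maxFtildeC α pX pYX r ≤ augustinObj α pX pYX q := by
  set V : X → ℝ := fun x => ∑ y, q y * r y x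
  have hVpos : ∀ x, 0 < V x := fun x =>
    sum_pos (fun y _ => mul_pos (hqpos y) (hr y x)) univ_nonempty
  have hV : ∑ x, V x = 1 := by
    simp only [V]
    rw [sum_comm]
    simp only [← mul_sum, hrsum, mul_one, hq]
  have hlog : ∀ x, α / (α - 1) * log (∑ y, pYX x y * r y x ^ (1 - 1 / α)) ≤
      1 / (α - 1) * log (renyiSum α pYX q x) + log (V x) := fun x => by
    have hW : ∑ y, pYX x y * r y x ^ (1 - 1 / α) ≤
        renyiSum α pYX q x ^ (1 / α) * V x ^ (1 - 1 / α) :=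
      sum_mul_rpow_le hα (hpYX x) hqpos (fun y => hr y x)
    have hZ := renyiSum_pos (α := α) hpYX hqpos x
    have hWpos : 0 < ∑ y, pYX x y * r y x ^ (1 - 1 / α) :=
      sum_pos (fun y _ => mul_pos (hpYX x y) (rpow_pos_of_pos (hr y x) _)) univ_nonempty
    have h := log_le_log hWpos hW
    rw [log_mul (rpow_pos_of_pos hZ _).ne' (rpow_pos_of_pos (hVpos x) _).ne',
      log_rpow hZ, log_rpow (hVpos x)] at h
    have hc : 0 ≤ α / (α - 1) := (div_pos (by linarith) (by linarith)).le
    calc α / (α - 1) * log (∑ y, pYX x y * r y x ^ (1 - 1 / α))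
        ≤ α / (α - 1) * (1 / α * log (renyiSum α pYX q x) + (1 - 1 / α) * log (V x)) :=
          mul_le_mul_of_nonneg_left h hc
      _ = 1 / (α - 1) * log (renyiSum α pYX q x) + log (V x) := by
          field_simp [(by linarith : α - 1 ≠ 0), (by linarith : α ≠ 0)]
  have hgibbs := sum_mul_log_div_le_log_sum hpX hpXpos hVpos
  rw [hV, log_one] at hgibbs
  calc maxFtildeC α pX pYX r
      ≤ ∑ x, pX x * (1 / (α - 1) * log (renyiSum α pYX q x) + log (V x) - log (pX x)) :=
        sum_le_sum fun x _ => mul_le_mul_of_nonneg_left (by linarith [hlog x]) (hpXpos x).le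
    _ = augustinObj α pX pYX q + ∑ x, pX x * log (V x / pX x) := by
        rw [augustinObj, ← sum_add_distrib]
        exact sum_congr rfl fun x _ => by rw [log_div (hVpos x).ne' (hpXpos x).ne']; ring
    _ ≤ augustinObj α pX pYX q := by linarith

end Augustin

section Telescope

variable {X Y : Type*} [Fintype X] [Fintype Y] [Nonempty X] [Nonempty Y] {α : ℝ}
  {pX : X → ℝ} {pYX : X → Y → ℝ}

theorem FtildeC_tiltedChannel (hα : 1 < α) (hpX : ∀ x, 0 < pX x) (hpYX : ∀ x y, 0 < pYX x y)
    {q : Y → ℝ} (hq : ∀ y, 0 < q y) :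
    FtildeC α pX pYX (tiltedChannel α pYX q) (rpost pX (tiltedChannel α pYX q)) =
      augustinObj α pX pYX q - klD (outputDist pX (tiltedChannel α pYX q)) q := by
  set g := tiltedChannel α pYX q
  have hg : ∀ x y, 0 < g x y := tiltedChannel_pos hpYX hq
  have hterm : ∀ x y, pX x * g x y * (α / (α - 1) * (log (pYX x y) - log (g x y))
        + log (rpost pX g y x) - log (pX x)) =
      pX x * g x y * (1 / (α - 1) * log (renyiSum α pYX q x))
        + pX x * g x y * (log (q y) - log (outputDist pX g y)) := by
    intro x y
    rw [log_rpost hpX hg, log_tiltedChannel hpYX hq]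
    field_simp [(by linarith : α - 1 ≠ 0)]
    ring
  have hobj : ∑ x, ∑ y, pX x * g x y * (1 / (α - 1) * log (renyiSum α pYX q x)) =
      augustinObj α pX pYX q :=
    sum_congr rfl fun x _ => by rw [← sum_mul, ← mul_sum, sum_tiltedChannel hpYX hq, mul_one]
  have hkl : ∑ x, ∑ y, pX x * g x y * (log (q y) - log (outputDist pX g y)) =
      -klD (outputDist pX g) q := by
    rw [sum_comm, klD_eq_sum_mul_log_sub (outputDist_pos hpX hg) hq, ← sum_neg_distrib]
    exact sum_congr rfl fun y _ => by rw [← sum_mul]; simp only [outputDist]; ring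
  rw [FtildeC_eq_sum hpX hpYX hg (rpost_pos hpX hg)]
  simp only [hterm, sum_add_distrib, hobj, hkl]
  ring

theorem FtildeC_rpost_sub_maxFtildeC_le (hα : 1 < α) (hpX : ∑ x, pX x = 1)
    (hpXpos : ∀ x, 0 < pX x) (hpYX : ∀ x y, 0 < pYX x y) {qs qt : X → Y → ℝ}
    (hqs : ∀ x, ∑ y, qs x y = 1) (hqspos : ∀ x y, 0 < qs x y)
    (hqt : ∀ x, ∑ y, qt x y = 1) (hqtpos : ∀ x y, 0 < qt x y) :
    FtildeC α pX pYX qs (rpost pX qs) - maxFtildeC α pX pYX (rpost pX qt) ≤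
      α / (α - 1) * ∑ x, pX x * klD (qs x) (qt x)
        - α / (α - 1) * ∑ x, pX x * klD (qs x) (channelUpdate α pYX (rpost pX qt) x) := by
  have hr := rpost_pos hpXpos hqtpos
  have hmax := FtildeC_eq_maxFtildeC_sub hα hpXpos hpYX hqs hqspos hr
  have hdiff := FtildeC_sub_FtildeC (α := α) (pYX := pYX) (qt := qs) hpXpos hr
    (rpost_pos hpXpos hqspos)
  rw [sum_mul_log_rpost_sub_log_rpost hpXpos hqspos hqtpos] at hdiff
  have hK : 0 ≤ ∑ x, pX x * klD (qs x) (qt x) := sum_nonneg fun x _ =>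
    mul_nonneg (hpXpos x).le (klD_nonneg (hqs x) (hqspos x) (hqt x) (hqtpos x))
  have hM : 0 ≤ klD (outputDist pX qs) (outputDist pX qt) :=
    klD_nonneg (sum_outputDist hpX hqs) (outputDist_pos hpXpos hqspos)
      (sum_outputDist hpX hqt) (outputDist_pos hpXpos hqtpos)
  have hc : 1 ≤ α / (α - 1) := by rw [le_div_iff₀ (by linarith)]; linarith
  linarith [mul_nonneg (sub_nonneg.2 hc) hK]

end Telescope

def posSimplex (Y : Type*) [Fintype Y] : Set (Y → ℝ) := {q | (∀ y, 0 < q y) ∧ ∑ y, q y = 1}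

section Minimizer

variable {X Y : Type*} [Fintype X] [Fintype Y] {α : ℝ} {pX : X → ℝ} {pYX : X → Y → ℝ}

theorem mul_log_sub_log_le_augustinObj (hα : 1 < α) (hpX : ∑ x, pX x = 1)
    (hpXnn : ∀ x, 0 ≤ pX x) {m : ℝ} (hm : 0 < m) (hmp : ∀ x y, m ≤ pYX x y) {q : Y → ℝ}
    (hq : ∀ y, 0 < q y) (y : Y) :
    α / (α - 1) * log m - log (q y) ≤ augustinObj α pX pYX q := by
  have hx : ∀ x, α / (α - 1) * log m - log (q y) ≤ 1 / (α - 1) * log (renyiSum α pYX q x) := by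
    intro x
    have hle : m ^ α * q y ^ (1 - α) ≤ renyiSum α pYX q x :=
      (mul_le_mul_of_nonneg_right (rpow_le_rpow hm.le (hmp x y) (by linarith))
        (rpow_pos_of_pos (hq y) _).le).trans <|
      single_le_sum (f := fun y => pYX x y ^ α * q y ^ (1 - α))
        (fun y _ => (mul_pos (rpow_pos_of_pos (hm.trans_le (hmp x y)) _)
          (rpow_pos_of_pos (hq y) _)).le) (mem_univ y)
    have hlog := log_le_log (mul_pos (rpow_pos_of_pos hm _) (rpow_pos_of_pos (hq y) _)) hle
    rw [log_mul (rpow_pos_of_pos hm _).ne' (rpow_pos_of_pos (hq y) _).ne', log_rpow hm,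
      log_rpow (hq y)] at hlog
    calc α / (α - 1) * log m - log (q y)
        = 1 / (α - 1) * (α * log m + (1 - α) * log (q y)) := by
          field_simp [(by linarith : α - 1 ≠ 0)]
          ring
      _ ≤ 1 / (α - 1) * log (renyiSum α pYX q x) :=
          mul_le_mul_of_nonneg_left hlog (one_div_pos.2 (by linarith)).le
  calc α / (α - 1) * log m - log (q y) = ∑ x, pX x * (α / (α - 1) * log m - log (q y)) := by
        rw [← sum_mul, hpX, one_mul]
    _ ≤ augustinObj α pX pYX q := sum_le_sum fun x _ => mul_le_mul_of_nonneg_left (hx x) (hpXnn x)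

theorem exists_forall_lt_augustinObj [Nonempty X] [Nonempty Y] (hα : 1 < α)
    (hpX : ∑ x, pX x = 1) (hpXnn : ∀ x, 0 ≤ pX x) (hpYX : ∀ x y, 0 < pYX x y) (C : ℝ) :
    ∃ δ > 0, ∀ q : Y → ℝ, (∀ y, 0 < q y) → ∀ y, q y ≤ δ → C < augustinObj α pX pYX q := by
  obtain ⟨z, hz⟩ := Finite.exists_min fun z : X × Y => pYX z.1 z.2
  refine ⟨exp (α / (α - 1) * log (pYX z.1 z.2) - C - 1), exp_pos _, fun q hq y hy => ?_⟩
  have hge := mul_log_sub_log_le_augustinObj hα hpX hpXnn (hpYX z.1 z.2) (fun x y => hz (x, y)) hq y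
  have hlog := log_le_log (hq y) hy
  rw [log_exp] at hlog
  linarith

theorem continuousOn_augustinObj [Nonempty Y] (hpYX : ∀ x y, 0 < pYX x y) :
    ContinuousOn (augustinObj α pX pYX) {q | ∀ y, 0 < q y} := by
  have hZ : ∀ x, ContinuousOn (fun q : Y → ℝ => renyiSum α pYX q x) {q | ∀ y, 0 < q y} :=
    fun x => continuousOn_finsetSum _ fun y _ => continuousOn_const.mul <|
      (continuous_apply y).continuousOn.rpow_const fun q hq => Or.inl (hq y).ne'
  exact continuousOn_finsetSum _ fun x _ => continuousOn_const.mul <| continuousOn_const.mul <|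
    (hZ x).log fun q hq => (renyiSum_pos hpYX hq x).ne'

theorem exists_isMinOn_augustinObj [Nonempty X] [Nonempty Y] (hα : 1 < α)
    (hpX : ∑ x, pX x = 1) (hpXnn : ∀ x, 0 ≤ pX x) (hpYX : ∀ x y, 0 < pYX x y) :
    ∃ qs ∈ posSimplex Y, IsMinOn (augustinObj α pX pYX) (posSimplex Y) qs := by
  -- `Φ` exceeds `Φ u` wherever some entry is below `ε`, so a minimizer over the compact set `K`
  -- is a minimizer over the whole open simplex.
  have hcard : (0 : ℝ) < Fintype.card Y := Nat.cast_pos.2 Fintype.card_pos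
  set u : Y → ℝ := fun _ => (Fintype.card Y : ℝ)⁻¹
  obtain ⟨δ, hδ, hlt⟩ := exists_forall_lt_augustinObj hα hpX hpXnn hpYX (augustinObj α pX pYX u)
  set ε := min δ (Fintype.card Y : ℝ)⁻¹
  have hε : 0 < ε := lt_min hδ (inv_pos.2 hcard)
  set K : Set (Y → ℝ) := Set.univ.pi (fun _ => Set.Icc ε 1) ∩ {q | ∑ y, q y = 1}
  have hKcompact : IsCompact K := (isCompact_univ_pi fun _ => isCompact_Icc).inter_right <|
    isClosed_eq (continuous_finsetSum _ fun y _ => continuous_apply y) continuous_const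
  have hKpos : K ⊆ {q | ∀ y, 0 < q y} := fun q hq y => hε.trans_le (hq.1 y (Set.mem_univ y)).1
  have huK : u ∈ K := by
    refine ⟨fun y _ => ⟨min_le_right _ _, inv_le_one_of_one_le₀ ?_⟩, ?_⟩
    · exact_mod_cast Fintype.card_pos
    · simp [u, hcard.ne']
  obtain ⟨qs, hqsK, hmin⟩ :=
    hKcompact.exists_isMinOn ⟨u, huK⟩ ((continuousOn_augustinObj hpYX).mono hKpos)
  refine ⟨qs, ⟨hKpos hqsK, hqsK.2⟩, fun q ⟨hqpos, hqsum⟩ => ?_⟩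
  by_cases hqK : q ∈ K
  · exact hmin hqK
  · have hsmall : ∃ y, q y < ε := by
      by_contra! hbig
      refine hqK ⟨fun y _ => ⟨hbig y, ?_⟩, hqsum⟩
      exact hqsum ▸ single_le_sum (fun y _ => (hqpos y).le) (mem_univ y)
    obtain ⟨y, hy⟩ := hsmall
    exact ((hmin huK).trans (hlt q hqpos y (hy.le.trans (min_le_left _ _))).le)

end Minimizer

section FixedPoint

variable {X Y : Type*} [Fintype X] [Fintype Y] [Nonempty Y] {α : ℝ} {pX : X → ℝ}
  {pYX : X → Y → ℝ}

theorem hasDerivAt_augustinObj_add_smul (hα : α ≠ 1) (hpYX : ∀ x y, 0 < pYX x y) {q : Y → ℝ}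
    (hq : ∀ y, 0 < q y) (v : Y → ℝ) :
    HasDerivAt (fun t : ℝ => augustinObj α pX pYX (q + t • v))
      (-∑ y, v y * outputDist pX (tiltedChannel α pYX q) y / q y) 0 := by
  have hZ : ∀ x, HasDerivAt (fun t : ℝ => renyiSum α pYX (q + t • v) x)
      (∑ y, pYX x y ^ α * (v y * (1 - α) * q y ^ (1 - α - 1))) 0 := fun x => by
    refine HasDerivAt.fun_sum fun y _ => ?_
    have hline : HasDerivAt (fun t : ℝ => q y + t * v y) (v y) 0 := by
      simpa using ((hasDerivAt_id (0 : ℝ)).mul_const (v y)).const_add (q y)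
    simpa using (hline.rpow_const (p := 1 - α) (Or.inl (by simpa using (hq y).ne'))).const_mul
      (pYX x y ^ α)
  refine (HasDerivAt.fun_sum (u := univ) fun x _ =>
    (((hZ x).log (by simpa using (renyiSum_pos hpYX hq x).ne')).const_mul
      (1 / (α - 1))).const_mul (pX x)).congr_deriv ?_
  simp only [zero_smul, add_zero, outputDist, tiltedChannel_apply, mul_sum, sum_div,
    ← sum_neg_distrib]
  rw [sum_comm]
  refine sum_congr rfl fun y _ => sum_congr rfl fun x _ => ?_
  have hZx := (renyiSum_pos (α := α) hpYX hq x).ne'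
  have hα' : α - 1 ≠ 0 := sub_ne_zero.2 hα
  rw [rpow_sub_one (hq y).ne']
  field_simp
  ring

theorem outputDist_tiltedChannel_le_of_isMinOn [Nonempty X] (hα : α ≠ 1) (hpX : ∑ x, pX x = 1)
    (hpYX : ∀ x y, 0 < pYX x y) {qs : Y → ℝ} (hqs : qs ∈ posSimplex Y)
    (hmin : IsMinOn (augustinObj α pX pYX) (posSimplex Y) qs) (y₀ : Y) :
    outputDist pX (tiltedChannel α pYX qs) y₀ ≤ qs y₀ := by
  classical
  set v : Y → ℝ := Pi.single y₀ 1 - qs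
  have hseg : ∀ t ∈ Set.Icc (0 : ℝ) (1 / 2), qs + t • v ∈ posSimplex Y := by
    intro t ht
    refine ⟨fun y => ?_, ?_⟩
    · have hsingle : (0 : ℝ) ≤ Pi.single (M := fun _ => ℝ) y₀ 1 y := by
        rw [Pi.single_apply]
        split_ifs <;> norm_num
      have hpos : 0 < (1 - t) * qs y := mul_pos (by linarith [ht.2]) (hqs.1 y)
      simp only [v, Pi.add_apply, Pi.smul_apply, Pi.sub_apply, smul_eq_mul]
      linarith [mul_nonneg ht.1 hsingle]
    · simp only [v, Pi.add_apply, Pi.smul_apply, Pi.sub_apply, smul_eq_mul, sum_add_distrib,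
        ← mul_sum, sum_sub_distrib, hqs.2, sum_pi_single', mem_univ, if_true]
      ring
  have hloc :
      IsLocalMinOn (fun t : ℝ => augustinObj α pX pYX (qs + t • v)) (Set.Icc 0 (1 / 2)) 0 :=
    IsMinOn.localize fun t ht => by simpa using hmin (hseg t ht)
  have hderiv := hloc.hasFDerivWithinAt_nonneg
    (hasDerivAt_augustinObj_add_smul hα hpYX hqs.1 v).hasDerivWithinAt.hasFDerivWithinAt
    (y := 1 / 2) (mem_posTangentConeAt_of_segment_subset (by simp [segment_eq_Icc]))
  -- The derivative of `Φ` at `qs` towards the vertex `δ_{y₀}` is `1 - m y₀ / qs y₀`.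
  set m := outputDist pX (tiltedChannel α pYX qs)
  have hm : ∑ y, m y = 1 := sum_outputDist hpX (sum_tiltedChannel hpYX hqs.1)
  have hsum : ∑ y, v y * m y / qs y = m y₀ / qs y₀ - 1 := by
    have hterm : ∀ y, v y * m y / qs y = (if y₀ = y then m y / qs y else 0) - m y := fun y => by
      have := (hqs.1 y).ne'
      simp only [v, Pi.sub_apply, Pi.single_apply, eq_comm (a := y)]
      split_ifs
      · field_simp
      · field_simp
        ring
    simp only [hterm, sum_sub_distrib, sum_ite_eq, mem_univ, if_true, hm]
  rw [← div_le_one (hqs.1 y₀)]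
  simpa [hsum] using hderiv

end FixedPoint

theorem outputDist_tiltedChannel_eq_of_isMinOn {X Y : Type*} [Fintype X] [Fintype Y]
    [Nonempty X] [Nonempty Y] {α : ℝ} {pX : X → ℝ} {pYX : X → Y → ℝ} (hα : α ≠ 1)
    (hpX : ∑ x, pX x = 1) (hpYX : ∀ x y, 0 < pYX x y) {qs : Y → ℝ} (hqs : qs ∈ posSimplex Y)
    (hmin : IsMinOn (augustinObj α pX pYX) (posSimplex Y) qs) :
    outputDist pX (tiltedChannel α pYX qs) = qs := by
  have hle := outputDist_tiltedChannel_le_of_isMinOn hα hpX hpYX hqs hmin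
  have hsum : ∑ y, outputDist pX (tiltedChannel α pYX qs) y = ∑ y, qs y := by
    rw [sum_outputDist hpX (sum_tiltedChannel hpYX hqs.1), hqs.2]
  funext y
  exact (sum_eq_sum_iff_of_le fun y _ => hle y).1 hsum y (mem_univ y)

section InformationValue

variable {X Y : Type*} [Fintype X] [Fintype Y] {α : ℝ} {pX : X → ℝ} {pYX : X → Y → ℝ}

theorem renyiDE_eq_of_pos {p q : Y → ℝ} (hq : ∀ y, 0 < q y) :
    renyiDE α p q = ((1 / (α - 1) * log (∑ y, p y ^ α * q y ^ (1 - α)) : ℝ) : EReal) :=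
  if_neg fun ⟨_, y, _, hy⟩ => (hq y).ne' hy

theorem renyiDE_eq_top (hα : 1 < α) {p q : Y → ℝ} {y : Y} (hp : p y ≠ 0) (hq : q y = 0) :
    renyiDE α p q = ⊤ :=
  if_pos ⟨hα, y, hp, hq⟩

theorem acMI_eq_augustinObj [Nonempty X] (hα : 1 < α) (hpX : ∀ x, 0 < pX x)
    (hpYX : ∀ x y, 0 < pYX x y) {qs : Y → ℝ} (hqs : qs ∈ posSimplex Y)
    (hmin : IsMinOn (augustinObj α pX pYX) (posSimplex Y) qs) :
    acMI α pX pYX = augustinObj α pX pYX qs := by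
  have hval : ∀ q ∈ posSimplex Y,
      ∑ x, ((pX x : ℝ) : EReal) * renyiDE α (fun y => pYX x y) q = augustinObj α pX pYX q :=
    fun q hq => by
      simp only [renyiDE_eq_of_pos hq.1, ← EReal.coe_mul, augustinObj, EReal.coe_finset_sum]
      rfl
  refine le_antisymm (sInf_le ⟨qs, ⟨fun y => (hqs.1 y).le, hqs.2⟩, (hval qs hqs).symm⟩) ?_
  refine le_sInf ?_
  rintro _ ⟨q, ⟨hqnn, hqsum⟩, rfl⟩
  by_cases hqpos : ∀ y, 0 < q y
  · exact (hval q ⟨hqpos, hqsum⟩).symm ▸ EReal.coe_le_coe_iff.2 (hmin ⟨hqpos, hqsum⟩)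
  · push Not at hqpos
    obtain ⟨y, hy⟩ := hqpos
    have htop : ∀ x, ((pX x : ℝ) : EReal) * renyiDE α (fun y => pYX x y) q = ⊤ := fun x => by
      rw [renyiDE_eq_top hα (hpYX x y).ne' (le_antisymm hy (hqnn y)),
        EReal.coe_mul_top_of_pos (hpX x)]
    simp [htop, EReal.mul_top_of_pos, Fintype.card_pos]

end InformationValue

section Iteration

variable {X Y : Type*} [Fintype X] [Fintype Y] [Nonempty X] [Nonempty Y] {α : ℝ}
  {pX : X → ℝ} {pYX : X → Y → ℝ} {q0 : X → Y → ℝ}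

theorem qtseq_pos (hpX : ∀ x, 0 < pX x) (hpYX : ∀ x y, 0 < pYX x y)
    (hq0 : ∀ x y, 0 < q0 x y) : ∀ k x y, 0 < qtseq α pX pYX q0 k x y
  | 0 => hq0
  | k + 1 => channelUpdate_pos hpYX (rpost_pos hpX (qtseq_pos hpX hpYX hq0 k))

theorem sum_qtseq (hpX : ∀ x, 0 < pX x) (hpYX : ∀ x y, 0 < pYX x y)
    (hq0sum : ∀ x, ∑ y, q0 x y = 1) (hq0 : ∀ x y, 0 < q0 x y) :
    ∀ k x, ∑ y, qtseq α pX pYX q0 k x y = 1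
  | 0 => hq0sum
  | k + 1 => sum_channelUpdate hpYX (rpost_pos hpX (qtseq_pos hpX hpYX hq0 k))

theorem FtildeC_qtseq_succ (hα : 1 < α) (hpX : ∀ x, 0 < pX x) (hpYX : ∀ x y, 0 < pYX x y)
    (hq0 : ∀ x y, 0 < q0 x y) (k : ℕ) :
    FtildeC α pX pYX (qtseq α pX pYX q0 (k + 1)) (rpost pX (qtseq α pX pYX q0 k)) =
      maxFtildeC α pX pYX (rpost pX (qtseq α pX pYX q0 k)) :=
  FtildeC_channelUpdate hα hpX hpYX (rpost_pos hpX (qtseq_pos hpX hpYX hq0 k))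

theorem tendsto_maxFtildeC_rpost_qtseq (hα : 1 < α) (hpX : ∑ x, pX x = 1)
    (hpXpos : ∀ x, 0 < pX x) (hpYX : ∀ x y, 0 < pYX x y) (hq0sum : ∀ x, ∑ y, q0 x y = 1)
    (hq0 : ∀ x y, 0 < q0 x y) {qs : Y → ℝ} (hqs : qs ∈ posSimplex Y)
    (hmin : IsMinOn (augustinObj α pX pYX) (posSimplex Y) qs) :
    Tendsto (fun k => maxFtildeC α pX pYX (rpost pX (qtseq α pX pYX q0 k))) atTop
      (𝓝 (augustinObj α pX pYX qs)) := by
  set Q := qtseq α pX pYX q0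
  set g := tiltedChannel α pYX qs
  have hQ := qtseq_pos (α := α) hpXpos hpYX hq0
  have hQsum := sum_qtseq (α := α) hpXpos hpYX hq0sum hq0
  have hg : ∀ x y, 0 < g x y := tiltedChannel_pos hpYX hqs.1
  have hgsum : ∀ x, ∑ y, g x y = 1 := sum_tiltedChannel hpYX hqs.1
  have hJ : FtildeC α pX pYX g (rpost pX g) = augustinObj α pX pYX qs := by
    rw [FtildeC_tiltedChannel hα hpXpos hpYX hqs.1,
      outputDist_tiltedChannel_eq_of_isMinOn hα.ne' hpX hpYX hqs hmin, klD_self, sub_zero]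
  refine tendsto_of_le_of_sub_le_sub_succ
    (a := fun k => α / (α - 1) * ∑ x, pX x * klD (g x) (Q k x))
    (fun k => maxFtildeC_le_augustinObj hα hpX hpXpos hpYX hqs.2 hqs.1
      (rpost_pos hpXpos (hQ k)) (sum_rpost hpXpos (hQ k)))
    (fun k => mul_nonneg (div_pos (by linarith) (by linarith)).le <| sum_nonneg fun x _ =>
      mul_nonneg (hpXpos x).le (klD_nonneg (hgsum x) (hg x) (hQsum k x) (hQ k x))) fun k => ?_
  have hstep := FtildeC_rpost_sub_maxFtildeC_le hα hpX hpXpos hpYX hgsum hg (hQsum k) (hQ k)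
  rwa [hJ, ← qtseq_succ] at hstep

end Iteration

end AugustinCsiszar

open AugustinCsiszar

theorem FtildeC_AO_monotone_and_tendsto_acMI_general {X Y : Type*} [Fintype X] [Fintype Y]
    [Nonempty X] [Nonempty Y]
    (α : ℝ) (hα : 1 < α)
    (pX : X → ℝ) (hpX : IsPMF pX) (hpXpos : ∀ x, 0 < pX x)
    (pYX : X → Y → ℝ) (hpYXpos : ∀ x y, 0 < pYX x y)
    (q0 : X → Y → ℝ) (hq0 : ∀ x, IsPMF (q0 x)) (hq0pos : ∀ x y, 0 < q0 x y) :
    (∀ k : ℕ,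
      FtildeC α pX pYX (qtseq α pX pYX q0 k) (rpost pX (qtseq α pX pYX q0 k))
        ≤ FtildeC α pX pYX (qtseq α pX pYX q0 (k + 1)) (rpost pX (qtseq α pX pYX q0 k)) ∧
      FtildeC α pX pYX (qtseq α pX pYX q0 (k + 1)) (rpost pX (qtseq α pX pYX q0 k))
        ≤ FtildeC α pX pYX (qtseq α pX pYX q0 (k + 1))
            (rpost pX (qtseq α pX pYX q0 (k + 1))) ∧
      ((FtildeC α pX pYX (qtseq α pX pYX q0 (k + 1))
          (rpost pX (qtseq α pX pYX q0 (k + 1))) : ℝ) : EReal)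
        ≤ acMI α pX pYX) ∧
    Filter.Tendsto
      (fun k : ℕ =>
        ((FtildeC α pX pYX (qtseq α pX pYX q0 (k + 1))
            (rpost pX (qtseq α pX pYX q0 k)) : ℝ) : EReal))
      Filter.atTop (nhds (acMI α pX pYX)) := by
  obtain ⟨qs, hqs, hmin⟩ :=
    exists_isMinOn_augustinObj hα hpX.2 (fun x => (hpXpos x).le) hpYXpos
  have hq0sum : ∀ x, ∑ y, q0 x y = 1 := fun x => (hq0 x).2
  have hQ := qtseq_pos (α := α) hpXpos hpYXpos hq0pos
  have hQsum := sum_qtseq (α := α) hpXpos hpYXpos hq0sum hq0pos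
  have hr : ∀ k, ∀ y x, 0 < rpost pX (qtseq α pX pYX q0 k) y x := fun k => rpost_pos hpXpos (hQ k)
  rw [acMI_eq_augustinObj hα hpXpos hpYXpos hqs hmin]
  refine ⟨fun k => ⟨?_, ?_, ?_⟩, ?_⟩
  · rw [FtildeC_qtseq_succ hα hpXpos hpYXpos hq0pos]
    exact FtildeC_le_maxFtildeC hα hpXpos hpYXpos (hQsum k) (hQ k) (hr k)
  · exact FtildeC_le_FtildeC_rpost hpXpos (hQ (k + 1)) (hr k) (sum_rpost hpXpos (hQ k))
  · exact EReal.coe_le_coe_iff.2 <|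
      (FtildeC_le_maxFtildeC hα hpXpos hpYXpos (hQsum _) (hQ _) (hr (k + 1))).trans <|
        maxFtildeC_le_augustinObj hα hpX.2 hpXpos hpYXpos hqs.2 hqs.1 (hr _)
          (sum_rpost hpXpos (hQ _))
  · simp only [FtildeC_qtseq_succ hα hpXpos hpYXpos hq0pos]
    exact EReal.tendsto_coe.2 <|
      tendsto_maxFtildeC_rpost_qtseq hα hpX.2 hpXpos hpYXpos hq0sum hq0pos hqs hmin

/-- Global convergence of the AO algorithm for the Augustin--Csiszár mutual information
(`α > 1`): (a) the objective values are nondecreasing and bounded by `I_α^C`, and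
(b) `F̃_α^C(q̃^{(k+1)}, r^{(k)}) → I_α^C` as `k → ∞`. -/
theorem FtildeC_AO_monotone_and_tendsto_acMI {X Y : Type*} [Fintype X] [Fintype Y]
    [Nonempty X] [Nonempty Y]
    (α : ℝ) (hα : 1 < α)
    (pX : X → ℝ) (hpX : IsPMF pX) (hpXpos : ∀ x, 0 < pX x)
    (pYX : X → Y → ℝ) (hpYX : ∀ x, IsPMF (pYX x)) (hpYXpos : ∀ x y, 0 < pYX x y)
    (q0 : X → Y → ℝ) (hq0 : ∀ x, IsPMF (q0 x)) (hq0pos : ∀ x y, 0 < q0 x y) :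
    (∀ k : ℕ,
      FtildeC α pX pYX (qtseq α pX pYX q0 k) (rpost pX (qtseq α pX pYX q0 k))
        ≤ FtildeC α pX pYX (qtseq α pX pYX q0 (k + 1)) (rpost pX (qtseq α pX pYX q0 k)) ∧
      FtildeC α pX pYX (qtseq α pX pYX q0 (k + 1)) (rpost pX (qtseq α pX pYX q0 k))
        ≤ FtildeC α pX pYX (qtseq α pX pYX q0 (k + 1))
            (rpost pX (qtseq α pX pYX q0 (k + 1))) ∧
      ((FtildeC α pX pYX (qtseq α pX pYX q0 (k + 1))
          (rpost pX (qtseq α pX pYX q0 (k + 1))) : ℝ) : EReal)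
        ≤ acMI α pX pYX) ∧
    Filter.Tendsto
      (fun k : ℕ =>
        ((FtildeC α pX pYX (qtseq α pX pYX q0 (k + 1))
            (rpost pX (qtseq α pX pYX q0 k)) : ℝ) : EReal))
      Filter.atTop (nhds (acMI α pX pYX)) :=
  FtildeC_AO_monotone_and_tendsto_acMI_general α hα pX hpX hpXpos pYX hpYXpos q0 hq0 hq0pos
end
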